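/- As an identity of formal power series in variables D_+ and D_-: ((1 - e^{-D_+ - D_-})/(D_+ + D_-)) \cdot (D_+/(1 - e^{-D_+})) \cdot (D_- /(1 - e^{-D_-})) - 1 = (D_+ D_-)/(D_+ + D_-) \cdot ( (1/D_+)(D_+/(1-e^{-D_+}) - D_+/2 - 1) + (1/D_-)(D_- /(1-e^{-D_-}) - D_- /2 - 1) ). -/

import Mathlib

open MvPowerSeries

/-- `e^{-D₊-D₋}` in `ℚ[[D₊,D₋]]`: the coefficient of `D₊^a D₋^b` is `(-1)^{a+b}/(a! b!)`. -/
noncomputable def expNegSum : MvPowerSeries (Fin 2) ℚ :=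
  fun d : Fin 2 →₀ ℕ => (-1 : ℚ) ^ (d 0 + d 1) / ((d 0).factorial * (d 1).factorial)

/-- The Todd-type series `D₊/(1 - e^{-D₊}) = ∑_n B'_n D₊^n / n!` (with `B'_1 = 1/2`). -/
noncomputable def ToddPlus : MvPowerSeries (Fin 2) ℚ :=
  fun d : Fin 2 →₀ ℕ => if d 1 = 0 then bernoulli' (d 0) / (d 0).factorial else 0

/-- The Todd-type series `D₋/(1 - e^{-D₋})`. -/
noncomputable def ToddMinus : MvPowerSeries (Fin 2) ℚ :=
  fun d : Fin 2 →₀ ℕ => if d 0 = 0 then bernoulli' (d 1) / (d 1).factorial else 0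

/-- `(1/D₊)(D₊/(1-e^{-D₊}) - D₊/2 - 1) = ∑_{r ≥ 2} B_r D₊^{r-1}/r!`. -/
noncomputable def QPlus : MvPowerSeries (Fin 2) ℚ :=
  fun d : Fin 2 →₀ ℕ =>
    if d 1 = 0 ∧ 1 ≤ d 0 then bernoulli' (d 0 + 1) / (d 0 + 1).factorial else 0

/-- `(1/D₋)(D₋/(1-e^{-D₋}) - D₋/2 - 1)`. -/
noncomputable def QMinus : MvPowerSeries (Fin 2) ℚ :=
  fun d : Fin 2 →₀ ℕ =>
    if d 0 = 0 ∧ 1 ≤ d 1 then bernoulli' (d 1 + 1) / (d 1 + 1).factorial else 0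

/-
Every series in the identity is the image of a one-variable series under `X ↦ D₊` or `X ↦ D₋`;
in particular `e^{-D₊-D₋} = e^{-D₊} e^{-D₋}`. With `T = X/(1 - e^{-X})` and `Q = (T - X/2 - 1)/X`,
the one-variable identities `(1 - e^{-X}) T = X` and `X Q = T - X/2 - 1`, together with
`1 - e^{-D₊} e^{-D₋} = (1 - e^{-D₊}) + e^{-D₊} (1 - e^{-D₋})`, reduce the claim to ring arithmetic.
-/

namespace PowerSeries

open Finsupp in
theorem coeff_toMvPowerSeries {σ R : Type*} [CommSemiring R] [DecidableEq σ] (f : R⟦X⟧) (i : σ)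
    (d : σ →₀ ℕ) :
    MvPowerSeries.coeff d (f.toMvPowerSeries i) =
      if d = single i (d i) then coeff (d i) f else 0 := by
  split_ifs with hd
  · rw [hd, single_eq_same]
    have := MvPowerSeries.coeff_embDomain_rename (R := R) (Function.Embedding.punit i) f
      (single () (d i))
    rwa [embDomain_single] at this
  · refine MvPowerSeries.coeff_rename_eq_zero _ f ?_
    rintro ⟨x, rfl⟩
    rw [unique_single x, mapDomain_single, single_eq_same] at hd
    exact hd rfl

theorem one_sub_evalNegHom_exp_mul_bernoulli'PowerSeries (A : Type*) [CommRing A] [Algebra ℚ A] :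
    (1 - evalNegHom (exp A)) * bernoulli'PowerSeries A = X := by
  linear_combination evalNegHom (exp A) * bernoulli'PowerSeries_mul_exp_sub_one A +
    (X - bernoulli'PowerSeries A) * exp_mul_exp_neg_eq_one (A := A)

theorem coeff_toMvPowerSeries_zero_mul_toMvPowerSeries_one {R : Type*} [CommSemiring R]
    (f g : R⟦X⟧) (d : Fin 2 →₀ ℕ) :
    MvPowerSeries.coeff d (f.toMvPowerSeries 0 * g.toMvPowerSeries 1) =
      coeff (d 0) f * coeff (d 1) g := by
  have hd : Finsupp.single 0 (d 0) + Finsupp.single 1 (d 1) = d := by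
    ext j; fin_cases j <;> simp
  rw [MvPowerSeries.coeff_mul,
    Finset.sum_eq_single (Finsupp.single 0 (d 0), Finsupp.single 1 (d 1))]
  · simp [coeff_toMvPowerSeries]
  · rintro ⟨p, q⟩ hpq hne
    rw [Finset.HasAntidiagonal.mem_antidiagonal] at hpq
    dsimp only at hpq ⊢
    rw [coeff_toMvPowerSeries, coeff_toMvPowerSeries]
    split_ifs with hp hq
    · refine absurd ?_ hne
      rw [hp, hq] at hpq ⊢
      subst hpq
      simp
    all_goals simp only [mul_zero, zero_mul]
  · simp [hd]

end PowerSeries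

theorem Finsupp.fin_two_eq_single_zero_iff (d : Fin 2 →₀ ℕ) : d = single 0 (d 0) ↔ d 1 = 0 := by
  rw [← support_subset_singleton]
  simp [Finset.subset_iff, Fin.forall_fin_two]

theorem Finsupp.fin_two_eq_single_one_iff (d : Fin 2 →₀ ℕ) : d = single 1 (d 1) ↔ d 0 = 0 := by
  rw [← support_subset_singleton]
  simp [Finset.subset_iff, Fin.forall_fin_two]

noncomputable def bernoulli'TailDivX : PowerSeries ℚ :=
  PowerSeries.mk fun n => if 1 ≤ n then bernoulli' (n + 1) / (n + 1).factorial else 0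

theorem X_mul_bernoulli'TailDivX :
    PowerSeries.X * bernoulli'TailDivX =
      bernoulli'PowerSeries ℚ - PowerSeries.C (1 / 2) * PowerSeries.X - 1 := by
  ext (_ | _ | n) <;>
    simp [bernoulli'TailDivX, bernoulli'PowerSeries, PowerSeries.coeff_one,
      PowerSeries.coeff_succ_X_mul]

theorem toddPlus_eq_toMvPowerSeries :
    ToddPlus = PowerSeries.toMvPowerSeries 0 (bernoulli'PowerSeries ℚ) := by
  ext d
  simp only [PowerSeries.coeff_toMvPowerSeries, Finsupp.fin_two_eq_single_zero_iff]
  simp [ToddPlus, bernoulli'PowerSeries, MvPowerSeries.coeff_apply]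

theorem toddMinus_eq_toMvPowerSeries :
    ToddMinus = PowerSeries.toMvPowerSeries 1 (bernoulli'PowerSeries ℚ) := by
  ext d
  simp only [PowerSeries.coeff_toMvPowerSeries, Finsupp.fin_two_eq_single_one_iff]
  simp [ToddMinus, bernoulli'PowerSeries, MvPowerSeries.coeff_apply]

theorem qPlus_eq_toMvPowerSeries : QPlus = PowerSeries.toMvPowerSeries 0 bernoulli'TailDivX := by
  ext d
  simp only [PowerSeries.coeff_toMvPowerSeries, Finsupp.fin_two_eq_single_zero_iff]
  simp [QPlus, bernoulli'TailDivX, ite_and, MvPowerSeries.coeff_apply]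

theorem qMinus_eq_toMvPowerSeries : QMinus = PowerSeries.toMvPowerSeries 1 bernoulli'TailDivX := by
  ext d
  simp only [PowerSeries.coeff_toMvPowerSeries, Finsupp.fin_two_eq_single_one_iff]
  simp [QMinus, bernoulli'TailDivX, ite_and, MvPowerSeries.coeff_apply]

theorem expNegSum_eq_mul_toMvPowerSeries :
    expNegSum = PowerSeries.toMvPowerSeries 0 (PowerSeries.evalNegHom (PowerSeries.exp ℚ)) *
      PowerSeries.toMvPowerSeries 1 (PowerSeries.evalNegHom (PowerSeries.exp ℚ)) := by
  ext d
  rw [PowerSeries.coeff_toMvPowerSeries_zero_mul_toMvPowerSeries_one]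
  simp only [coeff_apply, expNegSum, PowerSeries.evalNegHom, PowerSeries.coeff_rescale,
    PowerSeries.coeff_exp, Algebra.algebraMap_self, one_div, map_inv₀, map_natCast]
  ring

theorem todd_product_identity {A : Type*} [CommRing A] {a b ea eb ta tb qa qb h : A}
    (hh : 2 * h = 1) (hta : (1 - ea) * ta = a) (htb : (1 - eb) * tb = b)
    (hqa : a * qa = ta - h * a - 1) (hqb : b * qb = tb - h * b - 1) :
    (1 - ea * eb) * ta * tb - (a + b) = a * b * (qa + qb) := by
  linear_combination (tb - b) * hta + ea * ta * htb - b * hqa - a * hqb + a * b * hh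

-- Cross-multiplied by `D₊ + D₋`, which divides both numerators.
/-- `((1-e^{-D₊-D₋})/(D₊+D₋))·(D₊/(1-e^{-D₊}))·(D₋/(1-e^{-D₋})) - 1
  = (D₊D₋/(D₊+D₋))·((1/D₊)(D₊/(1-e^{-D₊}) - D₊/2 - 1) + (1/D₋)(D₋/(1-e^{-D₋}) - D₋/2 - 1))`
as formal power series; division by `D₊ + D₋` on both sides is legitimate (the numerators are
divisible by it), so the identity is stated after cross-multiplication by `D₊ + D₋`. -/
theorem stmt_3 :
    (1 - expNegSum) * ToddPlus * ToddMinus -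
        ((MvPowerSeries.X 0 : MvPowerSeries (Fin 2) ℚ) + MvPowerSeries.X 1) =
      (MvPowerSeries.X 0 : MvPowerSeries (Fin 2) ℚ) * MvPowerSeries.X 1 *
        (QPlus + QMinus) := by
  rw [expNegSum_eq_mul_toMvPowerSeries, toddPlus_eq_toMvPowerSeries, toddMinus_eq_toMvPowerSeries,
    qPlus_eq_toMvPowerSeries, qMinus_eq_toMvPowerSeries]
  have hT (i : Fin 2) := congrArg (PowerSeries.toMvPowerSeries i)
    (PowerSeries.one_sub_evalNegHom_exp_mul_bernoulli'PowerSeries ℚ)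
  have hQ (i : Fin 2) := congrArg (PowerSeries.toMvPowerSeries i) X_mul_bernoulli'TailDivX
  simp only [map_mul, map_sub, map_one, PowerSeries.toMvPowerSeries_X,
    PowerSeries.toMvPowerSeries_C] at hT hQ
  refine todd_product_identity ?_ (hT 0) (hT 1) (hQ 0) (hQ 1)
  rw [← map_ofNat MvPowerSeries.C 2, ← map_mul]
  norm_num
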